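/- arXiv:2307.12516 — 5 statements merged into one kernel-verified Lean document; each statement's English description precedes it below -/
import Mathlib

section
/- Let v : 2^O → ℝ be a submodular function (v(∅) = 0 and for all S ⊆ T ⊆ O and o ∉ T, v(S∪{o}) − v(S) ≥ v(T∪{o}) − v(T)) whose marginal gains all lie in a two-element set A = {a, b} with a < b. Then v is order-neutral: for any bundle S ⊆ O and any two orderings π, π' of the elements of S, the sorted vectors of marginal gains obtained by adding elements of S one at a time in the orders π and π' coincide. -/
open Finset

/-- A set function is submodular: `v ∅ = 0` and decreasing marginal gains. -/
def Submodular {α : Type*} [DecidableEq α] (v : Finset α → ℝ) : Prop :=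
  v ∅ = 0 ∧ ∀ S T : Finset α, S ⊆ T → ∀ o ∉ T,
    v (insert o T) - v T ≤ v (insert o S) - v S

/-- The telescoping sum vector of marginal gains along an ordering `l`. -/
def margList {α : Type*} [DecidableEq α] (v : Finset α → ℝ) (l : List α) : List ℝ :=
  (List.range l.length).map fun j =>
    v ((l.take (j + 1)).toFinset) - v ((l.take j).toFinset)

/-- The sorted (ascending) telescoping sum vector. -/
noncomputable def sortedVec {α : Type*} [DecidableEq α] (v : Finset α → ℝ) (l : List α) :
    List ℝ :=
  Multiset.sort (margList v l) (· ≤ ·)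

/-- `l` is an ordering of the bundle `S`. -/
def IsOrdering {α : Type*} [DecidableEq α] (l : List α) (S : Finset α) : Prop :=
  l.Nodup ∧ l.toFinset = S

/-- Order-neutrality: any two orderings of a bundle give the same sorted telescoping
sum vector. -/
def OrderNeutral {α : Type*} [DecidableEq α] (v : Finset α → ℝ) : Prop :=
  ∀ (S : Finset α) (l₁ l₂ : List α), IsOrdering l₁ S → IsOrdering l₂ S →
    sortedVec v l₁ = sortedVec v l₂

/-!
Along any ordering of a bundle `S` the marginal gains telescope to `v S - v ∅`, and there are
`#S` of them. A multiset of reals taking only two distinct values `a`, `b` is determined by its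
size and its sum (the two counts solve a linear system with determinant `b - a`), so all
orderings of `S` yield the same multiset of gains, hence the same sorted vector.
-/

namespace Multiset

variable {a b : ℝ}

lemma toFinset_subset_pair {m : Multiset ℝ} (h : ∀ x ∈ m, x = a ∨ x = b) :
    m.toFinset ⊆ {a, b} := fun x hx => by simpa using h x (mem_toFinset.mp hx)

lemma card_eq_count_add_count_of_forall_mem_pair {m : Multiset ℝ} (hab : a ≠ b)
    (h : ∀ x ∈ m, x = a ∨ x = b) : m.card = m.count a + m.count b := by
  rw [← toFinset_sum_count_eq, Finset.sum_subset (toFinset_subset_pair h) fun x _ hx =>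
    count_eq_zero.mpr (mt mem_toFinset.mpr hx), Finset.sum_pair hab]

lemma sum_eq_count_mul_add_count_mul_of_forall_mem_pair {m : Multiset ℝ} (hab : a ≠ b)
    (h : ∀ x ∈ m, x = a ∨ x = b) : m.sum = m.count a * a + m.count b * b := by
  rw [Finset.sum_multiset_count, Finset.sum_subset (toFinset_subset_pair h) fun x _ hx => by
    rw [count_eq_zero.mpr (mt mem_toFinset.mpr hx), zero_smul], Finset.sum_pair hab,
    nsmul_eq_mul, nsmul_eq_mul]

lemma eq_of_card_eq_of_sum_eq_of_forall_mem_pair {m₁ m₂ : Multiset ℝ} (hab : a ≠ b)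
    (h₁ : ∀ x ∈ m₁, x = a ∨ x = b) (h₂ : ∀ x ∈ m₂, x = a ∨ x = b)
    (hcard : m₁.card = m₂.card) (hsum : m₁.sum = m₂.sum) : m₁ = m₂ := by
  have hc₁ := card_eq_count_add_count_of_forall_mem_pair hab h₁
  have hc₂ := card_eq_count_add_count_of_forall_mem_pair hab h₂
  have hs₁ := sum_eq_count_mul_add_count_mul_of_forall_mem_pair hab h₁
  have hs₂ := sum_eq_count_mul_add_count_mul_of_forall_mem_pair hab h₂
  have hcount : (m₁.count a : ℝ) + m₁.count b = m₂.count a + m₂.count b := by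
    exact_mod_cast hc₁ ▸ hc₂ ▸ hcard
  have hb : m₁.count b = m₂.count b := by
    have : ((m₁.count b : ℝ) - m₂.count b) * (b - a) = 0 := by
      linear_combination hsum - hs₁ + hs₂ - a * hcount
    exact_mod_cast sub_eq_zero.mp ((mul_eq_zero.mp this).resolve_right (sub_ne_zero.mpr hab.symm))
  have hcount_eq_zero {x : ℝ} (hxa : x ≠ a) (hxb : x ≠ b) {m : Multiset ℝ}
      (h : ∀ y ∈ m, y = a ∨ y = b) : m.count x = 0 :=
    count_eq_zero.mpr fun hx => (h x hx).elim hxa hxb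
  ext x
  by_cases hxb : x = b
  · rw [hxb, hb]
  by_cases hxa : x = a
  · rw [hxa]; omega
  · rw [hcount_eq_zero hxa hxb h₁, hcount_eq_zero hxa hxb h₂]

end Multiset

lemma List.Nodup.getElem_notMem_take {α : Type*} {l : List α} (hl : l.Nodup) {j : ℕ}
    (hj : j < l.length) : l[j] ∉ l.take j := by
  intro hmem
  obtain ⟨i, hi, heq⟩ := List.getElem_of_mem hmem
  rw [List.getElem_take, hl.getElem_inj_iff] at heq
  rw [List.length_take] at hi
  omega

section MarginalGains

variable {α : Type*} [DecidableEq α]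

lemma length_margList (v : Finset α → ℝ) (l : List α) : (margList v l).length = l.length := by
  simp [margList]

lemma sum_margList (v : Finset α → ℝ) (l : List α) :
    (margList v l).sum = v l.toFinset - v ∅ := by
  simpa [margList] using List.sum_range_sub l.length fun j => v (l.take j).toFinset

lemma exists_marginal_of_mem_margList {v : Finset α → ℝ} {l : List α} (hl : l.Nodup) {x : ℝ}
    (hx : x ∈ margList v l) : ∃ S o, o ∉ S ∧ x = v (insert o S) - v S := by
  obtain ⟨j, hj, rfl⟩ := List.mem_map.mp hx
  rw [List.mem_range] at hj
  refine ⟨(l.take j).toFinset, l[j], by simpa using hl.getElem_notMem_take hj, ?_⟩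
  rw [List.take_succ_eq_append_getElem hj, List.toFinset_append, List.toFinset_cons,
    List.toFinset_nil, insert_empty_eq, union_comm, ← insert_eq]

end MarginalGains

theorem twoValued_submodular_orderNeutral_general {α : Type*} [DecidableEq α]
    (v : Finset α → ℝ) (a b : ℝ) (hab : a < b)
    (hvals : ∀ (S : Finset α) (o : α), o ∉ S → v (insert o S) - v S ∈ ({a, b} : Set ℝ)) :
    OrderNeutral v := by
  have hmem {l : List α} (hl : l.Nodup) : ∀ x ∈ (margList v l : Multiset ℝ), x = a ∨ x = b := by
    intro x hx
    obtain ⟨S, o, ho, rfl⟩ := exists_marginal_of_mem_margList hl (Multiset.mem_coe.mp hx)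
    exact hvals S o ho
  rintro S l₁ l₂ ⟨hl₁, rfl⟩ ⟨hl₂, hS⟩
  refine congrArg (Multiset.sort · _) (Multiset.eq_of_card_eq_of_sum_eq_of_forall_mem_pair
    hab.ne (hmem hl₁) (hmem hl₂) ?_ ?_)
  · simp only [Multiset.coe_card, length_margList, ← List.toFinset_card_of_nodup hl₁,
      ← List.toFinset_card_of_nodup hl₂, hS]
  · simp only [Multiset.sum_coe, sum_margList, hS]

/-- a submodular function whose marginal gains all lie in a two-element
set `{a, b}` with `a < b` is order-neutral. -/
theorem twoValued_submodular_orderNeutral {α : Type*} [Fintype α] [DecidableEq α]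
    (v : Finset α → ℝ) (a b : ℝ) (hab : a < b) (hsub : Submodular v)
    (hvals : ∀ (S : Finset α) (o : α), o ∉ S → v (insert o S) - v S ∈ ({a, b} : Set ℝ)) :
    OrderNeutral v :=
  twoValued_submodular_orderNeutral_general v a b hab hvals
end

section
/- Let v : 2^O → ℝ be an order-neutral submodular function and τ ∈ ℝ. Define β^τ(S) as the number of entries of the sorted telescoping sum vector of S (under v) that are ≥ τ. Then β^τ is a binary submodular function: β^τ(∅) = 0, every marginal gain of β^τ is in {0,1}, and β^τ is submodular. -/
open Finset

/-!
Extending an ordering of `S` by `o ∉ S` appends exactly one entry, `Δ_v(S, o)`, to the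
telescoping vector, so `β (S + o) - β S` is the indicator of `τ ≤ Δ_v(S, o)`. This is `0` or `1`,
and by diminishing returns of `v` it can only drop from `1` to `0` as `S` grows.
-/

section

variable {α : Type*} [DecidableEq α]

theorem margList_append_singleton (v : Finset α → ℝ) (l : List α) (o : α) :
    margList v (l ++ [o]) = margList v l ++ [v (insert o l.toFinset) - v l.toFinset] := by
  unfold margList
  rw [List.length_append, List.length_singleton, List.range_succ, List.map_append]
  congr 1
  · refine List.map_congr_left fun j hj => ?_
    rw [List.mem_range] at hj
    rw [List.take_append_of_le_length (by omega), List.take_append_of_le_length (by omega)]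
  · rw [List.map_singleton, List.take_of_length_le (by simp),
      List.take_append_of_le_length le_rfl, List.take_length, List.toFinset_append]
    simp

theorem isOrdering_toList (S : Finset α) : IsOrdering S.toList S :=
  ⟨S.nodup_toList, S.toList_toFinset⟩

theorem IsOrdering.append_singleton {l : List α} {S : Finset α} {o : α}
    (hl : IsOrdering l S) (ho : o ∉ S) : IsOrdering (l ++ [o]) (insert o S) := by
  obtain ⟨hnd, rfl⟩ := hl
  refine ⟨hnd.append (List.nodup_singleton o) ?_, ?_⟩
  · simpa using ho
  · ext; simp

theorem count_insert_sub_count (v : Finset α → ℝ) (τ : ℝ) (β : Finset α → ℕ)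
    (hβ : ∀ (S : Finset α) (l : List α), IsOrdering l S →
      β S = (margList v l).countP (fun x => decide (τ ≤ x)))
    {S : Finset α} {o : α} (ho : o ∉ S) :
    (β (insert o S) : ℤ) - β S = if τ ≤ v (insert o S) - v S then 1 else 0 := by
  have hS := isOrdering_toList S
  rw [hβ _ _ (hS.append_singleton ho), hβ _ _ hS, margList_append_singleton,
    List.countP_append, S.toList_toFinset, List.countP_singleton]
  by_cases h : τ ≤ v (insert o S) - v S <;> simp [h]

end

theorem threshold_count_binary_submodular_general {α : Type*} [DecidableEq α]
    (v : Finset α → ℝ) (τ : ℝ) (hsub : Submodular v)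
    (β : Finset α → ℕ)
    (hβ : ∀ (S : Finset α) (l : List α), IsOrdering l S →
      β S = (margList v l).countP (fun x => decide (τ ≤ x))) :
    β ∅ = 0 ∧
    (∀ (S : Finset α) (o : α), o ∉ S →
      ((β (insert o S) : ℤ) - (β S : ℤ)) ∈ ({0, 1} : Set ℤ)) ∧
    (∀ S T : Finset α, S ⊆ T → ∀ o ∉ T,
      (β (insert o T) : ℤ) - (β T : ℤ) ≤ (β (insert o S) : ℤ) - (β S : ℤ)) := by
  refine ⟨by simpa [margList] using hβ ∅ [] ⟨List.nodup_nil, List.toFinset_nil⟩, ?_, ?_⟩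
  · intro S o ho
    rw [count_insert_sub_count v τ β hβ ho]
    split_ifs <;> simp
  · intro S T hST o hoT
    rw [count_insert_sub_count v τ β hβ hoT,
      count_insert_sub_count v τ β hβ fun h => hoT (hST h)]
    by_cases hT : τ ≤ v (insert o T) - v T
    · simp [hT, hT.trans (hsub.2 S T hST o hoT)]
    · split_ifs <;> simp

/-- for an order-neutral submodular `v` and threshold `τ`, the function
`β` counting entries `≥ τ` of the sorted telescoping sum vector is a binary submodular
function: `β ∅ = 0`, marginal gains in `{0, 1}`, and submodularity. -/
theorem threshold_count_binary_submodular {α : Type*} [Fintype α] [DecidableEq α]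
    (v : Finset α → ℝ) (τ : ℝ) (hsub : Submodular v) (hon : OrderNeutral v)
    (β : Finset α → ℕ)
    (hβ : ∀ (S : Finset α) (l : List α), IsOrdering l S →
      β S = (margList v l).countP (fun x => decide (τ ≤ x))) :
    β ∅ = 0 ∧
    (∀ (S : Finset α) (o : α), o ∉ S →
      ((β (insert o S) : ℤ) - (β S : ℤ)) ∈ ({0, 1} : Set ℤ)) ∧
    (∀ S T : Finset α, S ⊆ T → ∀ o ∉ T,
      (β (insert o T) : ℤ) - (β T : ℤ) ≤ (β (insert o S) : ℤ) - (β S : ℤ)) :=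
  threshold_count_binary_submodular_general v τ hsub β hβ
end

section
/- Let c be a positive integer and let v : 2^O → ℝ be an order-neutral submodular function all of whose marginal gains lie in {−1, 0, c}. Then for any bundle X ⊆ O there exist pairwise disjoint sets X^c, X^0, X^{−1} with union X such that v(X^c ∪ X^0) = v(X^c) = c·|X^c| and v(X) = c·|X^c| − |X^{−1}|. -/
open Finset

/-!
Grow `X^c` greedily inside `X` by items of marginal gain `c`, then grow `X^c ∪ X^0` by items
of gain `0`. An item left over has gain `≤ 0` at `X^c` (otherwise it would have been taken
into `X^c`), hence, by submodularity, gain `≤ 0` and `≠ 0`, i.e. `-1`, at `X^c ∪ X^0` and at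
every larger set. Adding the leftovers one by one thus costs exactly `|X^{-1}|`.
-/

section ThreeDecomposition

variable {α : Type*} [DecidableEq α]

lemma le_zero_of_mem_of_ne {c : ℕ} {x : ℝ} (hx : x ∈ ({-1, 0, (c : ℝ)} : Set ℝ))
    (hxc : x ≠ c) : x ≤ 0 := by
  rcases hx with rfl | rfl | rfl
  · norm_num
  · rfl
  · exact absurd rfl hxc

lemma eq_neg_one_of_mem_of_neg {c : ℕ} {x : ℝ} (hx : x ∈ ({-1, 0, (c : ℝ)} : Set ℝ))
    (hneg : x < 0) : x = -1 := by
  rcases hx with rfl | rfl | rfl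
  · rfl
  · exact absurd hneg (lt_irrefl 0)
  · exact absurd hneg (Nat.cast_nonneg c).not_gt

lemma exists_maximal_extension_of_constant_gain (v : Finset α → ℝ) (t : ℝ) {S X : Finset α}
    (hSX : S ⊆ X) :
    ∃ A, S ⊆ A ∧ A ⊆ X ∧ v A = v S + t * (A \ S).card ∧
      ∀ o ∈ X \ A, v (insert o A) - v A ≠ t := by
  let reachable := X.powerset.filter fun A => S ⊆ A ∧ v A = v S + t * (A \ S).card
  have hS : S ∈ reachable := by simp [reachable, hSX]
  obtain ⟨A, hA, hmax⟩ := reachable.exists_max_image card ⟨S, hS⟩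
  simp only [reachable, mem_filter, mem_powerset] at hA hmax
  obtain ⟨hAX, hSA, hvA⟩ := hA
  refine ⟨A, hSA, hAX, hvA, fun o ho hgain => ?_⟩
  obtain ⟨hoX, hoA⟩ := mem_sdiff.1 ho
  have hoS : o ∉ S := fun h => hoA (hSA h)
  have hvoA : v (insert o A) = v S + t * (insert o A \ S).card := by
    rw [insert_sdiff_of_notMem _ hoS, card_insert_of_notMem (fun h => hoA (mem_sdiff.1 h).1)]
    push_cast
    linarith
  have := hmax (insert o A) ⟨insert_subset hoX hAX, hSA.trans (subset_insert o A), hvoA⟩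
  rw [card_insert_of_notMem hoA] at this
  omega

/-- Submodularity keeps every later gain of an item of `D` negative, hence equal to `-1`. -/
lemma Submodular.eq_sub_card_of_gain_neg {c : ℕ} {v : Finset α → ℝ} (hsub : Submodular v)
    (hvals : ∀ (S : Finset α) (o : α), o ∉ S →
      v (insert o S) - v S ∈ ({-1, 0, (c : ℝ)} : Set ℝ))
    {B : Finset α} (D : Finset α) (hBD : Disjoint B D)
    (hneg : ∀ o ∈ D, v (insert o B) - v B < 0) :
    v (B ∪ D) = v B - D.card := by
  induction D using Finset.induction_on with
  | empty => simp
  | insert o D hoD ih =>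
    rw [disjoint_insert_right] at hBD
    have hoBD : o ∉ B ∪ D := by simp [hoD, hBD.1]
    have hgain : v (insert o (B ∪ D)) - v (B ∪ D) = -1 := by
      refine eq_neg_one_of_mem_of_neg (hvals _ o hoBD) ?_
      calc v (insert o (B ∪ D)) - v (B ∪ D) ≤ v (insert o B) - v B :=
            hsub.2 B (B ∪ D) subset_union_left o hoBD
        _ < 0 := hneg o (mem_insert_self o D)
    have hvBD := ih hBD.2 fun o' ho' => hneg o' (mem_insert_of_mem ho')
    rw [union_insert, card_insert_of_notMem hoD]
    push_cast
    linarith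

end ThreeDecomposition

theorem three_decomposition_exists_general {α : Type*} [DecidableEq α]
    (c : ℕ) (v : Finset α → ℝ) (hsub : Submodular v)
    (hvals : ∀ (S : Finset α) (o : α), o ∉ S →
      v (insert o S) - v S ∈ ({-1, 0, (c : ℝ)} : Set ℝ)) :
    ∀ X : Finset α, ∃ Xc X0 Xm : Finset α,
      Xc ∪ X0 ∪ Xm = X ∧
      Disjoint Xc X0 ∧ Disjoint Xc Xm ∧ Disjoint X0 Xm ∧
      v (Xc ∪ X0) = v Xc ∧ v Xc = (c : ℝ) * Xc.card ∧
      v X = (c : ℝ) * Xc.card - Xm.card := by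
  intro X
  obtain ⟨A, -, hAX, hvA, hA⟩ := exists_maximal_extension_of_constant_gain v c (empty_subset X)
  rw [hsub.1, sdiff_empty, zero_add] at hvA
  obtain ⟨C, hAC, hCX, hvC, hC⟩ := exists_maximal_extension_of_constant_gain v 0 hAX
  rw [zero_mul, add_zero] at hvC
  have hCneg : ∀ o ∈ X \ C, v (insert o C) - v C < 0 := by
    intro o ho
    have hoA : o ∈ X \ A := sdiff_subset_sdiff le_rfl hAC ho
    refine lt_of_le_of_ne ?_ (hC o ho)
    calc v (insert o C) - v C ≤ v (insert o A) - v A := hsub.2 A C hAC o (mem_sdiff.1 ho).2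
      _ ≤ 0 := le_zero_of_mem_of_ne (hvals A o (mem_sdiff.1 hoA).2) (hA o hoA)
  have hvX := hsub.eq_sub_card_of_gain_neg hvals (X \ C) disjoint_sdiff hCneg
  rw [union_sdiff_of_subset hCX] at hvX
  refine ⟨A, C \ A, X \ C, ?_, disjoint_sdiff, disjoint_sdiff.mono_left hAC,
    disjoint_sdiff.mono_left sdiff_subset, ?_, hvA, ?_⟩
  · rw [union_sdiff_of_subset hAC, union_sdiff_of_subset hCX]
  · rw [union_sdiff_of_subset hAC, hvC]
  · rw [hvX, hvC, hvA]

/-- for a `{-1, 0, c}`-ONSUB function (c a positive integer), any bundle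
`X` decomposes into pairwise disjoint `X^c, X^0, X^{-1}` with
`v(X^c ∪ X^0) = v(X^c) = c·|X^c|` and `v(X) = c·|X^c| - |X^{-1}|`. -/
theorem three_decomposition_exists {α : Type*} [Fintype α] [DecidableEq α]
    (c : ℕ) (hc : 0 < c) (v : Finset α → ℝ) (hsub : Submodular v) (hon : OrderNeutral v)
    (hvals : ∀ (S : Finset α) (o : α), o ∉ S →
      v (insert o S) - v S ∈ ({-1, 0, (c : ℝ)} : Set ℝ)) :
    ∀ X : Finset α, ∃ Xc X0 Xm : Finset α,
      Xc ∪ X0 ∪ Xm = X ∧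
      Disjoint Xc X0 ∧ Disjoint Xc Xm ∧ Disjoint X0 Xm ∧
      v (Xc ∪ X0) = v Xc ∧ v Xc = (c : ℝ) * Xc.card ∧
      v X = (c : ℝ) * Xc.card - Xm.card :=
  three_decomposition_exists_general c v hsub hvals
end

section
/- Define Φ(X) = Σ_{h∈N} (|X_h| + h/n²)², where X = (X_1,…,X_n) is a partition of a subset of m items among n agents indexed 1,…,n. Then Φ(X) is bounded above by O((m + 1)²·n) and every operation that moves one item from agent j's bundle to agent i's bundle, where either |X_i| + 1 < |X_j| or (|X_i| + 1 = |X_j| and i < j), strictly decreases Φ(X) by at least 1/n⁴. Consequently, at most O(n⁴ m²) such operations can be performed consecutively. -/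
open Finset

/-- The potential function `Φ(X) = Σ_h (|X_h| + h/n²)²`, agents indexed `1, …, n`. -/
noncomputable def Phi {α : Type*} (n : ℕ) (X : Fin n → Finset α) : ℝ :=
  ∑ h : Fin n, (((X h).card : ℝ) + ((h : ℕ) + 1) / ((n : ℝ) ^ 2)) ^ 2

/-- An exchange transfer: move one item from agent `j`'s bundle to agent `i`'s bundle,
where either `|X_i| + 1 < |X_j|` or (`|X_i| + 1 = |X_j|` and `i < j`). -/
def ExchangeStep {α : Type*} [DecidableEq α] {n : ℕ} (X Y : Fin n → Finset α) : Prop :=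
  ∃ (i j : Fin n) (o : α), i ≠ j ∧ o ∈ X j ∧ o ∉ X i ∧
    Y j = (X j).erase o ∧ Y i = insert o (X i) ∧
    (∀ h, h ≠ i → h ≠ j → Y h = X h) ∧
    ((X i).card + 1 < (X j).card ∨ ((X i).card + 1 = (X j).card ∧ i < j))

lemma phi_nonneg {α : Type*} (n : ℕ) (X : Fin n → Finset α) : 0 ≤ Phi n X :=
  Finset.sum_nonneg fun _ _ => sq_nonneg _

lemma phi_bound {α : Type*} (n m : ℕ) (hn : 0 < n) (O : Finset α) (hm : O.card = m)
    (X : Fin n → Finset α) (hX : ∀ h, X h ⊆ O) :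
    Phi n X ≤ (n : ℝ) * ((m : ℝ) + 1) ^ 2 := by
  have hN1 : (1 : ℝ) ≤ n := by exact_mod_cast hn
  have key : ∀ h : Fin n, (((X h).card : ℝ) + ((h : ℕ) + 1) / ((n : ℝ) ^ 2)) ^ 2
      ≤ ((m : ℝ) + 1) ^ 2 := by
    intro h
    have hc : ((X h).card : ℝ) ≤ m := by
      exact_mod_cast hm ▸ Finset.card_le_card (hX h)
    have hfrac : ((h : ℕ) + 1 : ℝ) / ((n : ℝ) ^ 2) ≤ 1 := by
      rw [div_le_one (by positivity)]
      have : ((h : ℕ) : ℝ) + 1 ≤ n := by exact_mod_cast h.2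
      nlinarith
    have h0 : (0 : ℝ) ≤ ((X h).card : ℝ) + ((h : ℕ) + 1) / ((n : ℝ) ^ 2) := by positivity
    nlinarith
  calc Phi n X ≤ ∑ _h : Fin n, ((m : ℝ) + 1) ^ 2 := Finset.sum_le_sum fun h _ => key h
    _ = (n : ℝ) * ((m : ℝ) + 1) ^ 2 := by simp [mul_comm]

lemma phi_step {α : Type*} [DecidableEq α] (n : ℕ) (hn : 0 < n)
    (X Y : Fin n → Finset α) (hstep : ExchangeStep X Y) :
    1 / (n : ℝ) ^ 4 ≤ Phi n X - Phi n Y := by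
  obtain ⟨i, j, o, hij, hoj, hoi, hYj, hYi, hother, hcase⟩ := hstep
  have hN1 : (1 : ℝ) ≤ n := by exact_mod_cast hn
  set N : ℝ := (n : ℝ) with hNdef
  have hN0 : (0 : ℝ) < N := by linarith
  set f : (Fin n → Finset α) → Fin n → ℝ :=
    fun Z h => (((Z h).card : ℝ) + ((h : ℕ) + 1) / (N ^ 2)) ^ 2 with hf
  have hdiff : Phi n X - Phi n Y = (f X i - f Y i) + (f X j - f Y j) := by
    have : Phi n X - Phi n Y = ∑ h : Fin n, (f X h - f Y h) := by
      rw [Finset.sum_sub_distrib]; rfl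
    rw [this]
    rw [← Finset.sum_subset (Finset.subset_univ ({i, j} : Finset (Fin n)))]
    · rw [Finset.sum_pair hij]
    · intro h _ hh
      simp only [Finset.mem_insert, Finset.mem_singleton, not_or] at hh
      rw [hf]; simp [hother h hh.1 hh.2]
  have hci : ((Y i).card : ℝ) = ((X i).card : ℝ) + 1 := by
    rw [hYi, Finset.card_insert_of_notMem hoi]; push_cast; ring
  have hcj : ((Y j).card : ℝ) = ((X j).card : ℝ) - 1 := by
    have h1 : 1 ≤ (X j).card := Finset.card_pos.2 ⟨o, hoj⟩
    rw [hYj, Finset.card_erase_of_mem hoj]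
    push_cast [h1]; ring
  set a : ℝ := ((X i).card : ℝ) with ha
  set b : ℝ := ((X j).card : ℝ) with hb
  set P : ℝ := ((i : ℕ) + 1 : ℝ) / (N ^ 2) with hP
  set Q : ℝ := ((j : ℕ) + 1 : ℝ) / (N ^ 2) with hQ
  have hval : Phi n X - Phi n Y = 2 * (b - a - 1) + 2 * (Q - P) := by
    rw [hdiff, hf]; simp only
    rw [hci, hcj, ← ha, ← hb, ← hP, ← hQ]; ring
  have h14 : 1 / N ^ 4 ≤ 1 / N ^ 2 := by
    apply one_div_le_one_div_of_le (by positivity)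
    exact pow_le_pow_right₀ (by linarith) (by norm_num)
  have h40 : (0 : ℝ) ≤ 1 / N ^ 4 := by positivity
  rw [hval]
  rcases hcase with hlt | ⟨heq, hij2⟩
  · have hba : a + 2 ≤ b := by rw [ha, hb]; exact_mod_cast hlt
    have hPle : P ≤ 1 / N := by
      rw [hP, div_le_div_iff₀ (by positivity) hN0]
      have hi' : (i : ℕ) + 1 ≤ n := i.2
      have hi : ((i : ℕ) : ℝ) + 1 ≤ N := by rw [hNdef]; exact_mod_cast hi'
      nlinarith
    have hQge : 1 / N ^ 2 ≤ Q := by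
      rw [hQ]
      gcongr
      linarith [Nat.cast_nonneg (α := ℝ) (j : ℕ)]
    have h1N : 1 / N ≤ 1 := by
      rw [div_le_one hN0]; exact hN1
    linarith [h40]
  · have hba : b = a + 1 := by rw [ha, hb, ← heq]; push_cast; ring
    have hji : ((i : ℕ) : ℝ) + 1 ≤ ((j : ℕ) : ℝ) := by
      exact_mod_cast Nat.succ_le_of_lt hij2
    have hQP : 1 / N ^ 2 ≤ Q - P := by
      rw [hQ, hP, div_sub_div_same]
      gcongr
      linarith
    linarith [h14, hQP, h40, hba.ge, hba.le]

/-- `Φ` is bounded above by `n·(m+1)²`, each exchange transfer strictly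
decreases `Φ` by at least `1/n⁴`, and consequently at most `O(n⁴ m²)` (concretely, at
most `n⁵·(m+1)²`) consecutive exchange transfers can be performed. -/
theorem potential_bounds_exchange_steps {α : Type*} [DecidableEq α]
    (n m : ℕ) (hn : 0 < n) (O : Finset α) (hm : O.card = m) :
    (∀ X : Fin n → Finset α, (∀ h, X h ⊆ O) →
      Phi n X ≤ (n : ℝ) * ((m : ℝ) + 1) ^ 2) ∧
    (∀ X Y : Fin n → Finset α, ExchangeStep X Y →
      1 / (n : ℝ) ^ 4 ≤ Phi n X - Phi n Y) ∧
    (∀ (k : ℕ) (seq : ℕ → Fin n → Finset α),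
      (∀ t (h : Fin n), seq t h ⊆ O) →
      (∀ t < k, ExchangeStep (seq t) (seq (t + 1))) →
      (k : ℝ) ≤ (n : ℝ) ^ 5 * ((m : ℝ) + 1) ^ 2) := by
  refine ⟨phi_bound n m hn O hm, phi_step n hn, ?_⟩
  intro k seq hsub hsteps
  have hN0 : (0 : ℝ) < n := by exact_mod_cast hn
  have key : ∀ t, t ≤ k → (t : ℝ) / (n : ℝ) ^ 4 ≤ Phi n (seq 0) - Phi n (seq t) := by
    intro t
    induction t with
    | zero => intro _; simp
    | succ t ih =>
      intro ht
      have h1 := phi_step n hn (seq t) (seq (t + 1)) (hsteps t (by omega))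
      have h2 := ih (by omega)
      push_cast
      rw [add_div]
      linarith
  have h0 := phi_nonneg n (seq k)
  have hb := phi_bound n m hn O hm (seq 0) (hsub 0)
  have hk := key k le_rfl
  have : (k : ℝ) / (n : ℝ) ^ 4 ≤ (n : ℝ) * ((m : ℝ) + 1) ^ 2 := by linarith
  rw [div_le_iff₀ (by positivity)] at this
  calc (k : ℝ) ≤ (n : ℝ) * ((m : ℝ) + 1) ^ 2 * (n : ℝ) ^ 4 := this
    _ = (n : ℝ) ^ 5 * ((m : ℝ) + 1) ^ 2 := by ring
end

section
/- Let agents have {−1,0,c}-additive valuations (each agent i assigns each item a value in {−1,0,c} and values bundles additively, c a positive integer). Let X be a leximin allocation with decomposition X = X^c ∪ X^0 ∪ X^{−1} (where X^c_i, X^0_i, X^{−1}_i are the items in X_i that i values at c, 0, −1 respectively). Then for any two agents i, j with |X^{−1}_i| > 0, c·|X^c_i| − |X^{−1}_i| + 1 ≥ c·|X^c_j| − |X^{−1}_j|. -/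
open Finset

/-- Additive utility of a bundle given per-item values. -/
def util {α : Type*} [DecidableEq α] (w : α → ℤ) (S : Finset α) : ℤ := ∑ o ∈ S, w o

/-- A complete allocation: bundles are pairwise disjoint and cover all items. -/
def CompleteAlloc {α : Type*} [Fintype α] [DecidableEq α] {n : ℕ}
    (X : Fin n → Finset α) : Prop :=
  (∀ i j : Fin n, i ≠ j → Disjoint (X i) (X j)) ∧ Finset.univ.biUnion X = Finset.univ

/-- The ascending-sorted utility vector of an allocation. -/
noncomputable def sUtil {α : Type*} [Fintype α] [DecidableEq α] {n : ℕ}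
    (value : Fin n → α → ℤ) (X : Fin n → Finset α) : List ℤ :=
  Multiset.sort (Multiset.map (fun i => util (value i) (X i)) Finset.univ.val) (· ≤ ·)

/-- A leximin allocation: a complete allocation whose sorted utility vector is not
lexicographically dominated by that of any other complete allocation. -/
def Leximin {α : Type*} [Fintype α] [DecidableEq α] {n : ℕ}
    (value : Fin n → α → ℤ) (X : Fin n → Finset α) : Prop :=
  CompleteAlloc X ∧ ∀ Y : Fin n → Finset α, CompleteAlloc Y →
    ¬ List.Lex (· < ·) (sUtil value X) (sUtil value Y)

/-!
If `j` were better off than `i` by at least `2`, moving one of `i`'s chores to `j` would raise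
`i`'s utility by `1` and lower `j`'s by at most `1`, leaving both strictly above `i`'s old
utility. The sorted utility vector would then have one entry fewer equal to that old value and
the same entries below it, so it would lexicographically dominate the original one.
-/

section SortedLex

variable {β : Type*} [LinearOrder β]

theorem List.lex_lt_of_count_lt (a : β) :
    ∀ {l₁ l₂ : List β}, l₁.Pairwise (· ≤ ·) → l₂.Pairwise (· ≤ ·) → l₁.length = l₂.length →
      (∀ v < a, l₁.count v = l₂.count v) → l₂.count a < l₁.count a →
      List.Lex (· < ·) l₁ l₂
  | [], _, _, _, _, _, hat => by simp at hat
  | _ :: _, [], _, _, hlen, _, _ => by simp at hlen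
  | x :: t₁, y :: t₂, h₁, h₂, hlen, hbelow, hat => by
    have not_mem_of_lt : ∀ z < x, z ∉ x :: t₁ := fun z hz hmem =>
      (List.mem_cons.mp hmem).elim (fun h => hz.ne h)
        (fun h => (List.rel_of_pairwise_cons h₁ h).not_gt hz)
    rcases lt_trichotomy x y with hxy | rfl | hyx
    · exact .rel hxy
    · refine .cons (lex_lt_of_count_lt a h₁.of_cons h₂.of_cons (by simpa using hlen)
        (fun v hv => ?_) ?_)
      · have := hbelow v hv
        simp only [List.count_cons] at this
        omega
      · simp only [List.count_cons] at hat
        omega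
    · exfalso
      by_cases hya : y < a
      · have := hbelow y hya
        rw [List.count_eq_zero.mpr (not_mem_of_lt y hyx), List.count_cons_self] at this
        omega
      · rw [List.count_eq_zero.mpr (not_mem_of_lt a ((not_lt.mp hya).trans_lt hyx))] at hat
        omega

theorem Multiset.lex_sort_of_count_lt {s t : Multiset β} (a : β) (hcard : s.card = t.card)
    (hbelow : ∀ v < a, s.count v = t.count v) (hat : t.count a < s.count a) :
    List.Lex (· < ·) (s.sort (· ≤ ·)) (t.sort (· ≤ ·)) := by
  have count_sort (u : Multiset β) (v : β) : (u.sort (· ≤ ·)).count v = u.count v := by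
    rw [← Multiset.coe_count, Multiset.sort_eq]
  refine List.lex_lt_of_count_lt a (Multiset.pairwise_sort _ _) (Multiset.pairwise_sort _ _)
    (by simpa only [Multiset.length_sort] using hcard) (fun v hv => ?_) ?_
  · simpa only [count_sort] using hbelow v hv
  · simpa only [count_sort] using hat

theorem Multiset.lex_sort_cons_cons {x y x' y' : β} (R : Multiset β) (hy : x < y)
    (hx' : x < x') (hy' : x < y') :
    List.Lex (· < ·) ((x ::ₘ y ::ₘ R).sort (· ≤ ·)) ((x' ::ₘ y' ::ₘ R).sort (· ≤ ·)) := by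
  refine Multiset.lex_sort_of_count_lt x (by simp) (fun v hv => ?_) ?_
  · simp [hv.ne, (hv.trans hy).ne, (hv.trans hx').ne, (hv.trans hy').ne]
  · simp [hy.ne, hx'.ne, hy'.ne]

theorem Multiset.lex_sort_map_univ_of_pair {ι : Type*} [Fintype ι] [DecidableEq ι]
    {f g : ι → β} {i j : ι} (hij : i ≠ j) (hrest : ∀ k, k ≠ i → k ≠ j → g k = f k)
    (hj : f i < f j) (hgi : f i < g i) (hgj : f i < g j) :
    List.Lex (· < ·) ((univ.val.map f).sort (· ≤ ·)) ((univ.val.map g).sort (· ≤ ·)) := by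
  set R := ((univ : Finset ι).erase i).erase j
  have huniv : (univ : Finset ι).val = i ::ₘ j ::ₘ R.val := by
    rw [Finset.erase_val, Multiset.cons_erase (Finset.mem_erase.mpr ⟨hij.symm, mem_univ j⟩),
      Finset.erase_val, Multiset.cons_erase (mem_univ i)]
  have hR : R.val.map g = R.val.map f := Multiset.map_congr rfl fun k hk => by
    obtain ⟨hkj, hk⟩ := Finset.mem_erase.mp hk
    exact hrest k (Finset.ne_of_mem_erase hk) hkj
  simpa only [huniv, Multiset.map_cons, hR] using Multiset.lex_sort_cons_cons _ hj hgi hgj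

end SortedLex

section Allocation

variable {α : Type*} [DecidableEq α]

theorem util_eq_mul_card_sub_card (c : ℕ) {w : α → ℤ}
    (hw : ∀ o, w o ∈ ({-1, 0, (c : ℤ)} : Set ℤ)) (S : Finset α) :
    util w S = c * (S.filter (fun o => w o = c)).card - (S.filter (fun o => w o = -1)).card := by
  have hsplit : ∀ o ∈ S,
      w o = (if w o = c then (c : ℤ) else 0) + (if w o = -1 then -1 else 0) := by
    intro o _
    obtain h | h | h : w o = -1 ∨ w o = 0 ∨ w o = c := hw o <;> simp [h]
  rw [util, Finset.sum_congr rfl hsplit, Finset.sum_add_distrib, ← Finset.sum_filter,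
    ← Finset.sum_filter, Finset.sum_const, Finset.sum_const, nsmul_eq_mul, nsmul_eq_mul]
  ring

variable [Fintype α] {n : ℕ}

def moveItem (X : Fin n → Finset α) (o : α) (j : Fin n) : Fin n → Finset α :=
  fun k => if k = j then insert o (X k) else (X k).erase o

theorem CompleteAlloc.moveItem {X : Fin n → Finset α} (hX : CompleteAlloc X) (o : α)
    (j : Fin n) : CompleteAlloc (moveItem X o j) := by
  refine ⟨fun k l hkl => ?_, Finset.eq_univ_of_forall fun a => ?_⟩
  · have hdisj := hX.1 k l hkl
    unfold _root_.moveItem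
    split_ifs with hk hl hl
    · exact absurd (hk.trans hl.symm) hkl
    · exact Finset.disjoint_insert_left.mpr
        ⟨Finset.notMem_erase o _, hdisj.mono_right (Finset.erase_subset _ _)⟩
    · exact Finset.disjoint_insert_right.mpr
        ⟨Finset.notMem_erase o _, hdisj.mono_left (Finset.erase_subset _ _)⟩
    · exact hdisj.mono (Finset.erase_subset _ _) (Finset.erase_subset _ _)
  · rw [Finset.mem_biUnion]
    by_cases hao : a = o
    · exact ⟨j, mem_univ j, by simp [_root_.moveItem, hao]⟩
    · obtain ⟨k, -, hk⟩ := Finset.mem_biUnion.mp (hX.2 ▸ mem_univ a : a ∈ univ.biUnion X)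
      exact ⟨k, mem_univ k, by unfold _root_.moveItem; split_ifs <;> simp [hk, hao]⟩

theorem CompleteAlloc.eq_of_mem {X : Fin n → Finset α} (hX : CompleteAlloc X) {o : α}
    {i k : Fin n} (hi : o ∈ X i) (hk : o ∈ X k) : k = i := by
  by_contra hki
  exact Finset.disjoint_left.mp (hX.1 k i hki) hk hi

theorem Leximin.util_le_util_add_one {value : Fin n → α → ℤ} {X : Fin n → Finset α}
    (hlex : Leximin value X) {i j : Fin n} {o : α} (ho : o ∈ X i) (hoi : value i o = -1)
    (hoj : -1 ≤ value j o) : util (value j) (X j) ≤ util (value i) (X i) + 1 := by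
  by_cases hij : i = j
  · subst hij; omega
  by_contra! hgap
  have hY : ∀ k, k ≠ i → k ≠ j → moveItem X o j k = X k := fun k hki hkj => by
    simp only [moveItem, hkj, if_false]
    exact Finset.erase_eq_of_notMem fun hk => hki (hlex.1.eq_of_mem ho hk)
  have hYi : util (value i) (moveItem X o j i) = util (value i) (X i) + 1 := by
    simp only [moveItem, hij, if_false, util, Finset.sum_erase_eq_sub ho, hoi]
    ring
  have hYj : util (value j) (moveItem X o j j) = value j o + util (value j) (X j) := by
    simp only [moveItem, if_true, util]
    exact Finset.sum_insert fun hoX => hij (hlex.1.eq_of_mem hoX ho)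
  refine hlex.2 _ (hlex.1.moveItem o j) (Multiset.lex_sort_map_univ_of_pair hij
    (fun k hki hkj => by simp only [hY k hki hkj]) (by omega) ?_ ?_)
  · simp only [hYi]; omega
  · simp only [hYj]; omega

end Allocation

theorem leximin_chore_balance_general {α : Type*} [Fintype α] [DecidableEq α]
    (n : ℕ) (c : ℕ) (value : Fin n → α → ℤ)
    (hval : ∀ i o, value i o ∈ ({-1, 0, (c : ℤ)} : Set ℤ))
    (X : Fin n → Finset α) (hlex : Leximin value X) :
    ∀ i j : Fin n,
      0 < ((X i).filter (fun o => value i o = -1)).card →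
      (c : ℤ) * ((X j).filter (fun o => value j o = c)).card
        - ((X j).filter (fun o => value j o = -1)).card ≤
      (c : ℤ) * ((X i).filter (fun o => value i o = c)).card
        - ((X i).filter (fun o => value i o = -1)).card + 1 := by
  intro i j hchore
  obtain ⟨o, ho⟩ := Finset.card_pos.mp hchore
  rw [Finset.mem_filter] at ho
  have hoj : -1 ≤ value j o := by
    obtain h | h | h : value j o = -1 ∨ value j o = 0 ∨ value j o = c := hval j o <;> omega
  rw [← util_eq_mul_card_sub_card c (hval i), ← util_eq_mul_card_sub_card c (hval j)]
  exact hlex.util_le_util_add_one ho.1 ho.2 hoj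

/-- with `{-1, 0, c}`-additive valuations, in any leximin allocation `X`,
for agents `i, j` with `|X^{-1}_i| > 0` we have
`c·|X^c_i| - |X^{-1}_i| + 1 ≥ c·|X^c_j| - |X^{-1}_j|`. -/
theorem leximin_chore_balance {α : Type*} [Fintype α] [DecidableEq α]
    (n : ℕ) (c : ℕ) (hc : 0 < c) (value : Fin n → α → ℤ)
    (hval : ∀ i o, value i o ∈ ({-1, 0, (c : ℤ)} : Set ℤ))
    (X : Fin n → Finset α) (hlex : Leximin value X) :
    ∀ i j : Fin n,
      0 < ((X i).filter (fun o => value i o = -1)).card →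
      (c : ℤ) * ((X j).filter (fun o => value j o = c)).card
        - ((X j).filter (fun o => value j o = -1)).card ≤
      (c : ℤ) * ((X i).filter (fun o => value i o = c)).card
        - ((X i).filter (fun o => value i o = -1)).card + 1 :=
  leximin_chore_balance_general n c value hval X hlex
end
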